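/- The map ⟨·,·⟩ : V × V → ℂ defined by ⟨f(z), g(z)⟩ = L(f(z)·ḡ(1/z)) is an inner product on V; in particular, for every nonzero Laurent polynomial f ∈ V, the value ⟨f(z), f(z)⟩ = L(f(z)·f̄(1/z)) is a positive real number. -/

import Mathlib

open Polynomial LaurentPolynomial Finset

noncomputable section

/-- Extension of the Verblunsky coefficients to integer indices, with the
convention `α₋₁ = -1` (and junk value `-1` for all negative indices). -/
def az (α : ℕ → ℂ) (k : ℤ) : ℂ := if 0 ≤ k then α k.toNat else -1

/-- The monic OPUC `Φ_n` defined by Szegő's recurrence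
`Φ_{n+1}(z) = z·Φ_n(z) - conj(α_n)·Φ_n^*(z)`, where `Φ_n^*` is the reverse
polynomial `reflect n (map conj Φ_n)`. -/
def szego (α : ℕ → ℂ) : ℕ → Polynomial ℂ
  | 0 => 1
  | n + 1 =>
      Polynomial.X * szego α n -
        Polynomial.C ((starRingEnd ℂ) (α n)) *
          Polynomial.reflect n ((szego α n).map (starRingEnd ℂ))

/-- `f̄(1/z)` as a Laurent polynomial, for a polynomial `f`. -/
def polyBarInv (f : Polynomial ℂ) : LaurentPolynomial ℂ :=
  f.sum fun k c => LaurentPolynomial.C ((starRingEnd ℂ) c) * LaurentPolynomial.T (-(k : ℤ))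

/-- `f̄(1/z)` as a Laurent polynomial, for a Laurent polynomial `f`. -/
def laurentBarInv (f : LaurentPolynomial ℂ) : LaurentPolynomial ℂ :=
  Finsupp.sum f.coeff fun k c => LaurentPolynomial.C ((starRingEnd ℂ) c) * LaurentPolynomial.T (-k)

/-- The generalized moment `μ_{n,r,s} = ⟨Φ_s(z), z^n·Φ_r(z)⟩ / ⟨Φ_s(z), Φ_s(z)⟩`,
where `⟨f,g⟩ = L(f(z)·ḡ(1/z))` and `⟨Φ_s, Φ_s⟩ = ∏_{j<s} (1 - |α_j|²)`. -/
def genMom (L : LaurentPolynomial ℂ →ₗ[ℂ] ℂ) (α : ℕ → ℂ) (n : ℤ) (r s : ℕ) : ℂ :=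
  L (Polynomial.toLaurent (szego α s) *
      laurentBarInv (LaurentPolynomial.T n * Polynomial.toLaurent (szego α r))) /
    ∏ j ∈ Finset.range s, ((1 - Complex.normSq (α j) : ℝ) : ℂ)

/-- `IsLatticePath S p l q` : the list of steps `l`, starting at `p`, forms a lattice
path from `p` to `q` lying weakly above the x-axis, each step `st` taken from a
position `x` satisfying the (possibly position-dependent) step condition `S x st`. -/
def IsLatticePath (S : ℤ × ℤ → ℤ × ℤ → Prop) : ℤ × ℤ → List (ℤ × ℤ) → ℤ × ℤ → Prop
  | p, [], q => p = q ∧ 0 ≤ p.2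
  | p, st :: rest, q => 0 ≤ p.2 ∧ S p st ∧ IsLatticePath S (p + st) rest q

/-- The weight of a path: the product of the weights of its steps, where the weight
of a step may depend on its starting position. -/
def pathWeight (w : ℤ × ℤ → ℤ × ℤ → ℂ) : ℤ × ℤ → List (ℤ × ℤ) → ℂ
  | _, [] => 1
  | p, st :: rest => w p st * pathWeight w (p + st) rest

/-- Łukasiewicz steps: `(1, k)` with `k ≤ 1`. -/
def lukaStep (_p st : ℤ × ℤ) : Prop := st.1 = 1 ∧ st.2 ≤ 1

/-- Łukasiewicz step weights: an up-step has weight `1`, and a step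
`(a,b) → (a+1,b-k)` (`0 ≤ k ≤ b`) has weight
`-α_b·conj(α_{b-k-1})·∏_{j=b-k}^{b-1} (1-|α_j|²)`. -/
def wtLstep (α : ℕ → ℂ) (p st : ℤ × ℤ) : ℂ :=
  if st.2 = 1 then 1
  else
    -(az α p.2) * (starRingEnd ℂ) (az α (p.2 + st.2 - 1)) *
      ∏ j ∈ Finset.Ico (p.2 + st.2) p.2, ((1 - Complex.normSq (az α j) : ℝ) : ℂ)

/-- Gentle Motzkin steps: `(1,1)` (only at even `a+b`), `(1,0)`, `(1,-1)` (only at odd `a+b`). -/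
def gentleStep (p st : ℤ × ℤ) : Prop :=
  (st = (1, 1) ∧ Even (p.1 + p.2)) ∨ st = (1, 0) ∨ (st = (1, -1) ∧ Odd (p.1 + p.2))

/-- Gentle Motzkin step weights. -/
def wtMstep (α : ℕ → ℂ) (p st : ℤ × ℤ) : ℂ :=
  if st = (1, 1) then 1
  else if st = (1, -1) then ((1 - Complex.normSq (az α (p.2 - 1)) : ℝ) : ℂ)
  else if Even (p.1 + p.2) then az α p.2
  else -(starRingEnd ℂ) (az α (p.2 - 1))

/-- Schröder steps: `(1,1)`, `(1,0)`, `(0,-1)`. -/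
def schStep (_p st : ℤ × ℤ) : Prop := st = (1, 1) ∨ st = (1, 0) ∨ st = (0, -1)

/-- Schröder step weights. -/
def wtSstep (α : ℕ → ℂ) (p st : ℤ × ℤ) : ℂ :=
  if st = (1, 1) then 1
  else if st = (1, 0) then -((starRingEnd ℂ) (az α (p.2 - 1)) / (starRingEnd ℂ) (az α p.2))
  else
    ((starRingEnd ℂ) (az α (p.2 - 2)) / (starRingEnd ℂ) (az α (p.2 - 1))) *
      ((1 - Complex.normSq (az α (p.2 - 1)) : ℝ) : ℂ)


/-!
Write `⟨f, g⟩ = L(f(z) ḡ(1/z))`. The map `f ↦ f̄(1/z)` is a conjugate-linear multiplicative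
involution of `ℂ[z, z⁻¹]`, so `f ↦ conj L(f̄(1/z))` is again a linear functional with the defining
properties of `L`. Since the `Φ_n` and the `Φ̄_n(1/z)` span `ℂ[z, z⁻¹]`, it equals `L`, and this is
conjugate symmetry. Szegő's recurrence then gives, by induction on `n`, `⟨Φ_n, z^j⟩ = 0` for
`j < n` and `⟨Φ_n, Φ_n⟩ = ⟨Φ_n, z^n⟩ = ∏_{j<n} (1 - |α_j|²) > 0`. Writing a polynomial of
degree `N` as `a Φ_N + r` with `deg r < N` yields `⟨p, p⟩ = |a|² ⟨Φ_N, Φ_N⟩ + ⟨r, r⟩`, hence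
positivity by induction on the degree; a Laurent polynomial is `z^{-n} p`, and
`⟨z^{-n} p, z^{-n} p⟩ = ⟨p, p⟩`.
-/

theorem laurentBarInv_add (f g : ℂ[T;T⁻¹]) :
    laurentBarInv (f + g) = laurentBarInv f + laurentBarInv g := by
  unfold laurentBarInv
  rw [AddMonoidAlgebra.coeff_add]
  exact Finsupp.sum_add_index' (by simp) fun _ _ _ => by simp [add_mul]

theorem laurentBarInv_C_mul_T (a : ℂ) (n : ℤ) :
    laurentBarInv (LaurentPolynomial.C a * T n) =
      LaurentPolynomial.C (starRingEnd ℂ a) * T (-n) := by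
  rw [← single_eq_C_mul_T, laurentBarInv, AddMonoidAlgebra.coeff_single,
    Finsupp.sum_single_index (by simp)]

theorem laurentBarInv_C (a : ℂ) :
    laurentBarInv (LaurentPolynomial.C a) = LaurentPolynomial.C (starRingEnd ℂ a) := by
  simpa using laurentBarInv_C_mul_T a 0

theorem laurentBarInv_T (n : ℤ) : laurentBarInv (T n) = T (-n) := by
  simpa using laurentBarInv_C_mul_T 1 n

theorem laurentBarInv_one : laurentBarInv (1 : ℂ[T;T⁻¹]) = 1 := by
  simpa using laurentBarInv_T 0

theorem laurentBarInv_eq_invert_map (f : ℂ[T;T⁻¹]) :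
    laurentBarInv f = invert (AddMonoidAlgebra.mapRingHom ℤ (starRingEnd ℂ) f) := by
  induction f using LaurentPolynomial.induction_on' with
  | add p q hp hq => rw [laurentBarInv_add, hp, hq, map_add, map_add]
  | C_mul_T n a =>
    rw [laurentBarInv_C_mul_T, ← single_eq_C_mul_T a n, AddMonoidAlgebra.mapRingHom_single,
      single_eq_C_mul_T, map_mul, invert_C, invert_T]

theorem laurentBarInv_mul (f g : ℂ[T;T⁻¹]) :
    laurentBarInv (f * g) = laurentBarInv f * laurentBarInv g := by
  simp only [laurentBarInv_eq_invert_map, map_mul]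

theorem laurentBarInv_smul (a : ℂ) (f : ℂ[T;T⁻¹]) :
    laurentBarInv (a • f) = starRingEnd ℂ a • laurentBarInv f := by
  rw [LaurentPolynomial.smul_eq_C_mul, LaurentPolynomial.smul_eq_C_mul, laurentBarInv_mul,
    laurentBarInv_C]

theorem laurentBarInv_laurentBarInv (f : ℂ[T;T⁻¹]) : laurentBarInv (laurentBarInv f) = f := by
  induction f using LaurentPolynomial.induction_on' with
  | add p q hp hq => rw [laurentBarInv_add, laurentBarInv_add, hp, hq]
  | C_mul_T n a => rw [laurentBarInv_C_mul_T, laurentBarInv_C_mul_T, Complex.conj_conj, neg_neg]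

@[simps]
def laurentBarInvₗ : ℂ[T;T⁻¹] →ₗ⋆[ℂ] ℂ[T;T⁻¹] where
  toFun := laurentBarInv
  map_add' := laurentBarInv_add
  map_smul' := laurentBarInv_smul

theorem laurentBarInv_toLaurent (p : ℂ[X]) : laurentBarInv (toLaurent p) = polyBarInv p := by
  induction p using Polynomial.induction_on' with
  | add p q hp hq =>
    rw [map_add, laurentBarInv_add, hp, hq, polyBarInv, polyBarInv, polyBarInv,
      Polynomial.sum_add_index p q _ (by simp) fun _ _ _ => by rw [map_add, map_add, add_mul]]
  | monomial n a =>
    rw [toLaurent_C_mul_T, laurentBarInv_C_mul_T, polyBarInv,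
      Polynomial.sum_monomial_index _ _ (by simp)]

theorem Polynomial.toLaurent_map {R S : Type*} [Semiring R] [Semiring S] (f : R →+* S)
    (p : R[X]) : toLaurent (p.map f) = AddMonoidAlgebra.mapRingHom ℤ f (toLaurent p) := by
  induction p using Polynomial.induction_on' with
  | add p q hp hq => rw [Polynomial.map_add, map_add, map_add, map_add, hp, hq]
  | monomial n a =>
    rw [Polynomial.map_monomial, toLaurent_C_mul_T, toLaurent_C_mul_T, ← single_eq_C_mul_T,
      ← single_eq_C_mul_T, AddMonoidAlgebra.mapRingHom_single]

theorem toLaurent_reverse_map_conj (p : ℂ[X]) :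
    toLaurent (p.map (starRingEnd ℂ)).reverse = T p.natDegree * laurentBarInv (toLaurent p) := by
  rw [toLaurent_reverse, natDegree_map_eq_of_injective (RingHom.injective _), toLaurent_map,
    laurentBarInv_eq_invert_map, mul_comm]

theorem szego_monic_and_natDegree (α : ℕ → ℂ) (n : ℕ) :
    (szego α n).Monic ∧ (szego α n).natDegree = n := by
  induction n with
  | zero => exact ⟨monic_one, natDegree_one⟩
  | succ n ih =>
    obtain ⟨hmonic, hdeg⟩ := ih
    have hX : (X * szego α n).natDegree = n + 1 := by
      rw [natDegree_X_mul hmonic.ne_zero, hdeg]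
    have hstar : (Polynomial.C (starRingEnd ℂ (α n)) *
        reflect n ((szego α n).map (starRingEnd ℂ))).natDegree < (X * szego α n).natDegree := by
      refine (natDegree_C_mul_le _ _).trans_lt ?_
      rw [hX, Nat.lt_succ_iff]
      refine natDegree_reflect_le.trans ?_
      rw [natDegree_map_eq_of_injective (RingHom.injective _), hdeg, max_self]
    exact ⟨(monic_X.mul hmonic).sub_of_left (degree_lt_degree hstar),
      (natDegree_sub_eq_left_of_natDegree_lt hstar).trans hX⟩

theorem monic_szego (α : ℕ → ℂ) (n : ℕ) : (szego α n).Monic :=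
  (szego_monic_and_natDegree α n).1

theorem natDegree_szego (α : ℕ → ℂ) (n : ℕ) : (szego α n).natDegree = n :=
  (szego_monic_and_natDegree α n).2

theorem coeff_szego_self (α : ℕ → ℂ) (n : ℕ) : (szego α n).coeff n = 1 := by
  rw [← (monic_szego α n).coeff_natDegree, natDegree_szego]

theorem toLaurent_szego_zero (α : ℕ → ℂ) : toLaurent (szego α 0) = 1 := map_one _

theorem toLaurent_szego_succ (α : ℕ → ℂ) (n : ℕ) :
    toLaurent (szego α (n + 1)) = T 1 * toLaurent (szego α n) -
      LaurentPolynomial.C (starRingEnd ℂ (α n)) *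
        (T n * laurentBarInv (toLaurent (szego α n))) := by
  have hreverse : reflect n ((szego α n).map (starRingEnd ℂ)) =
      ((szego α n).map (starRingEnd ℂ)).reverse := by
    rw [reverse, natDegree_map_eq_of_injective (RingHom.injective _), natDegree_szego]
  rw [szego, hreverse, map_sub, map_mul, map_mul, toLaurent_X, toLaurent_C,
    toLaurent_reverse_map_conj, natDegree_szego]

theorem span_szego_eq_top (α : ℕ → ℂ) : Submodule.span ℂ (Set.range (szego α)) = ⊤ :=
  Polynomial.Sequence.span
    ⟨szego α, fun n => by
      rw [degree_eq_natDegree (monic_szego α n).ne_zero, natDegree_szego]⟩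
    fun n => by simp [(monic_szego α n).leadingCoeff]

theorem span_szego_union_laurentBarInv_szego_eq_top (α : ℕ → ℂ) :
    Submodule.span ℂ (Set.range (fun n => toLaurent (szego α n)) ∪
      Set.range (fun n => laurentBarInv (toLaurent (szego α n)))) = ⊤ := by
  have hpoly (p : ℂ[X]) :
      toLaurent p ∈ Submodule.span ℂ (Set.range fun n => toLaurent (szego α n)) := by
    have hp : p ∈ Submodule.span ℂ (Set.range (szego α)) := by rw [span_szego_eq_top]; trivial
    have := Submodule.apply_mem_span_image_of_mem_span toLaurentAlg.toLinearMap hp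
    rwa [← Set.range_comp] at this
  have hbar (p : ℂ[X]) : laurentBarInv (toLaurent p) ∈
      Submodule.span ℂ (Set.range fun n => laurentBarInv (toLaurent (szego α n))) := by
    have := Submodule.apply_mem_span_image_of_mem_span laurentBarInvₗ (hpoly p)
    rwa [← Set.range_comp] at this
  rw [Submodule.eq_top_iff']
  intro f
  induction f using LaurentPolynomial.induction_on' with
  | add p q hp hq => exact add_mem hp hq
  | C_mul_T n a =>
    rw [← LaurentPolynomial.smul_eq_C_mul]
    refine Submodule.smul_mem _ a ?_
    obtain ⟨k, rfl | rfl⟩ := Int.eq_nat_or_neg n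
    · exact Submodule.span_mono Set.subset_union_left (by simpa using hpoly (X ^ k))
    · exact Submodule.span_mono Set.subset_union_right
        (by simpa [laurentBarInv_T] using hbar (X ^ k))

theorem prod_one_sub_normSq_pos {α : ℕ → ℂ} (hα : ∀ k, ‖α k‖ < 1) (n : ℕ) :
    0 < ∏ j ∈ range n, (1 - Complex.normSq (α j)) :=
  prod_pos fun j _ => by
    rw [Complex.normSq_eq_norm_sq, sub_pos]
    exact pow_lt_one₀ (norm_nonneg _) (hα j) two_ne_zero

structure IsSzegoFunctional (α : ℕ → ℂ) (L : ℂ[T;T⁻¹] →ₗ[ℂ] ℂ) : Prop where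
  map_one : L 1 = 1
  map_szego : ∀ k, 1 ≤ k → L (toLaurent (szego α k)) = 0
  map_laurentBarInv_szego : ∀ k, 1 ≤ k → L (laurentBarInv (toLaurent (szego α k))) = 0

namespace IsSzegoFunctional

open scoped ComplexOrder

variable {α : ℕ → ℂ} {L : ℂ[T;T⁻¹] →ₗ[ℂ] ℂ}

theorem ext {L' : ℂ[T;T⁻¹] →ₗ[ℂ] ℂ} (hL : IsSzegoFunctional α L)
    (hL' : IsSzegoFunctional α L') : L = L' := by
  refine LinearMap.ext_on (span_szego_union_laurentBarInv_szego_eq_top α) ?_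
  rintro _ (⟨n, rfl⟩ | ⟨n, rfl⟩) <;> obtain rfl | hn := n.eq_zero_or_pos
  · simp only [toLaurent_szego_zero, hL.map_one, hL'.map_one]
  · rw [hL.map_szego n hn, hL'.map_szego n hn]
  · simp only [toLaurent_szego_zero, laurentBarInv_one, hL.map_one, hL'.map_one]
  · rw [hL.map_laurentBarInv_szego n hn, hL'.map_laurentBarInv_szego n hn]

theorem map_laurentBarInv (hL : IsSzegoFunctional α L) (f : ℂ[T;T⁻¹]) :
    L (laurentBarInv f) = starRingEnd ℂ (L f) := by
  let L' : ℂ[T;T⁻¹] →ₗ[ℂ] ℂ := (starLinearEquiv ℂ).toLinearMap ∘ₛₗ L ∘ₛₗ laurentBarInvₗ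
  have hL' : IsSzegoFunctional α L' :=
    ⟨by simp [L', laurentBarInv_one, hL.map_one],
      fun k hk => by simp [L', hL.map_laurentBarInv_szego k hk],
      fun k hk => by simp [L', laurentBarInv_laurentBarInv, hL.map_szego k hk]⟩
  simpa [L', laurentBarInv_laurentBarInv] using LinearMap.congr_fun (hL.ext hL') (laurentBarInv f)

theorem conj_map_mul_laurentBarInv (hL : IsSzegoFunctional α L) (f g : ℂ[T;T⁻¹]) :
    starRingEnd ℂ (L (f * laurentBarInv g)) = L (g * laurentBarInv f) := by
  rw [← hL.map_laurentBarInv, laurentBarInv_mul, laurentBarInv_laurentBarInv, mul_comm]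

theorem map_szego_succ_mul_T (hL : IsSzegoFunctional α L) (n : ℕ) (j : ℤ) :
    L (toLaurent (szego α (n + 1)) * T (-j)) =
      L (toLaurent (szego α n) * T (1 - j)) -
        starRingEnd ℂ (α n) * starRingEnd ℂ (L (toLaurent (szego α n) * T (j - n))) := by
  have hstar : LaurentPolynomial.C (starRingEnd ℂ (α n)) *
      (T n * laurentBarInv (toLaurent (szego α n))) * T (-j) =
        starRingEnd ℂ (α n) • laurentBarInv (toLaurent (szego α n) * T (j - n)) := by
    rw [laurentBarInv_mul, laurentBarInv_T, LaurentPolynomial.smul_eq_C_mul, neg_sub,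
      sub_eq_add_neg, T_add]
    ring
  rw [toLaurent_szego_succ, sub_mul, map_sub, hstar, map_smul, hL.map_laurentBarInv, smul_eq_mul,
    sub_eq_neg_add 1 j, T_add]
  congr 2
  ring

theorem map_szego_mul_T_neg_of_lt (hL : IsSzegoFunctional α L) :
    ∀ n j : ℕ, j < n → L (toLaurent (szego α n) * T (-j)) = 0
  | 0, j, hj => absurd hj j.not_lt_zero
  | n + 1, 0, _ => by simpa using hL.map_szego (n + 1) n.succ_pos
  | n + 1, j + 1, hj => by
    rw [map_szego_succ_mul_T hL, show (1 : ℤ) - (j + 1 : ℕ) = -(j : ℕ) by push_cast; ring,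
      show ((j + 1 : ℕ) : ℤ) - n = -(n - (j + 1) : ℕ) by
        push_cast [Nat.cast_sub (by omega : j + 1 ≤ n)]; ring,
      map_szego_mul_T_neg_of_lt hL n j (by omega),
      map_szego_mul_T_neg_of_lt hL n (n - (j + 1)) (by omega), map_zero, mul_zero, sub_zero]

theorem map_szego_mul_T_neg_self (hL : IsSzegoFunctional α L) (n : ℕ) :
    L (toLaurent (szego α n) * T (-n)) =
      ((∏ j ∈ range n, (1 - Complex.normSq (α j)) : ℝ) : ℂ) := by
  induction n with
  | zero => simp [toLaurent_szego_zero, hL.map_one]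
  | succ n ih =>
    have hT1 : L (toLaurent (szego α n) * T 1) =
        starRingEnd ℂ (α n) * ((∏ j ∈ range n, (1 - Complex.normSq (α j)) : ℝ) : ℂ) := by
      have h := hL.map_szego_succ_mul_T n 0
      rw [neg_zero, T_zero, mul_one, hL.map_szego (n + 1) n.succ_pos, sub_zero, zero_sub, ih,
        Complex.conj_ofReal] at h
      exact sub_eq_zero.mp h.symm
    rw [show -((n + 1 : ℕ) : ℤ) = -(n + 1 : ℤ) by push_cast; ring, hL.map_szego_succ_mul_T,
      show (1 : ℤ) - (n + 1) = -n by ring, show (n + 1 : ℤ) - n = 1 by ring, ih, hT1, map_mul,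
      Complex.conj_conj, Complex.conj_ofReal, prod_range_succ]
    push_cast
    rw [← Complex.mul_conj]
    ring

theorem map_szego_mul_laurentBarInv (hL : IsSzegoFunctional α L) {n : ℕ} {p : ℂ[X]}
    (hp : p.natDegree ≤ n) :
    L (toLaurent (szego α n) * laurentBarInv (toLaurent p)) =
      starRingEnd ℂ (p.coeff n) * ((∏ j ∈ range n, (1 - Complex.normSq (α j)) : ℝ) : ℂ) := by
  have hbar : laurentBarInv (toLaurent p) =
      ∑ i ∈ range (n + 1), starRingEnd ℂ (p.coeff i) • T (-i) := by
    conv_lhs => rw [as_sum_range' p (n + 1) (Nat.lt_succ_of_le hp)]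
    rw [map_sum, ← laurentBarInvₗ_apply, map_sum]
    simp [← C_mul_X_pow_eq_monomial, laurentBarInv_C_mul_T, LaurentPolynomial.smul_eq_C_mul]
  rw [hbar, mul_sum, map_sum, sum_range_succ, sum_eq_zero fun i hi => by
      rw [mul_smul_comm, map_smul, hL.map_szego_mul_T_neg_of_lt n i (mem_range.mp hi), smul_zero],
    zero_add, mul_smul_comm, map_smul, hL.map_szego_mul_T_neg_self, smul_eq_mul]

theorem map_szego_mul_laurentBarInv_szego (hL : IsSzegoFunctional α L) (n : ℕ) :
    L (toLaurent (szego α n) * laurentBarInv (toLaurent (szego α n))) =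
      ((∏ j ∈ range n, (1 - Complex.normSq (α j)) : ℝ) : ℂ) := by
  rw [hL.map_szego_mul_laurentBarInv (natDegree_szego α n).le, coeff_szego_self,
    (starRingEnd ℂ).map_one, one_mul]

theorem map_smul_add_mul_laurentBarInv (hL : IsSzegoFunctional α L) (a : ℂ)
    {u v : ℂ[T;T⁻¹]} (huv : L (u * laurentBarInv v) = 0) :
    L ((a • u + v) * laurentBarInv (a • u + v)) =
      Complex.normSq a * L (u * laurentBarInv u) + L (v * laurentBarInv v) := by
  have hvu : L (v * laurentBarInv u) = 0 := by
    rw [← hL.conj_map_mul_laurentBarInv, huv, map_zero]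
  rw [laurentBarInv_add, laurentBarInv_smul]
  simp only [add_mul, mul_add, smul_mul_assoc, mul_smul_comm, map_add, map_smul, smul_eq_mul, huv,
    hvu, mul_zero, add_zero]
  rw [← Complex.mul_conj]
  ring

theorem map_toLaurent_mul_laurentBarInv_pos (hL : IsSzegoFunctional α L) (hα : ∀ k, ‖α k‖ < 1)
    {p : ℂ[X]} (hp : p ≠ 0) : 0 < L (toLaurent p * laurentBarInv (toLaurent p)) := by
  induction hN : p.natDegree using Nat.strong_induction_on generalizing p with
  | _ N ih =>
    set a := p.leadingCoeff
    set r := p - Polynomial.C a * szego α N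
    have ha : a ≠ 0 := leadingCoeff_ne_zero.mpr hp
    have hpdeg : p.degree = N := by rw [degree_eq_natDegree hp, hN]
    have hr : r.degree < N := hpdeg ▸ degree_sub_lt_left
      (by rw [hpdeg, degree_C_mul ha, degree_eq_natDegree (monic_szego α N).ne_zero,
        natDegree_szego]) hp
      (by rw [leadingCoeff_mul, leadingCoeff_C, (monic_szego α N).leadingCoeff, mul_one])
    have hdecomp : toLaurent p = a • toLaurent (szego α N) + toLaurent r := by
      rw [LaurentPolynomial.smul_eq_C_mul, ← toLaurent_C_mul_eq, ← map_add, add_sub_cancel]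
    have hcross : L (toLaurent (szego α N) * laurentBarInv (toLaurent r)) = 0 := by
      rw [hL.map_szego_mul_laurentBarInv (natDegree_le_of_degree_le hr.le),
        coeff_eq_zero_of_degree_lt hr, map_zero, zero_mul]
    have hr_nonneg : 0 ≤ L (toLaurent r * laurentBarInv (toLaurent r)) := by
      obtain hr0 | hr0 := eq_or_ne r 0
      · simp [hr0]
      · exact (ih _ (natDegree_lt_iff_degree_lt hr0 |>.mpr hr) hr0 rfl).le
    rw [hdecomp, hL.map_smul_add_mul_laurentBarInv a hcross,
      hL.map_szego_mul_laurentBarInv_szego]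
    refine add_pos_of_pos_of_nonneg (mul_pos ?_ ?_) hr_nonneg
    · exact Complex.zero_lt_real.mpr (Complex.normSq_pos.mpr ha)
    · exact Complex.zero_lt_real.mpr (prod_one_sub_normSq_pos hα N)

theorem map_mul_laurentBarInv_self_pos (hL : IsSzegoFunctional α L) (hα : ∀ k, ‖α k‖ < 1)
    {f : ℂ[T;T⁻¹]} (hf : f ≠ 0) : 0 < L (f * laurentBarInv f) := by
  obtain ⟨n, p, hp⟩ := exists_T_pow f
  have hp0 : p ≠ 0 := by
    rintro rfl
    exact hf (by simpa [(isUnit_T (n : ℤ)).mul_left_eq_zero] using hp.symm)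
  have hself : toLaurent p * laurentBarInv (toLaurent p) = f * laurentBarInv f := by
    rw [hp, laurentBarInv_mul, laurentBarInv_T, mul_mul_mul_comm, ← T_add, add_neg_cancel, T_zero,
      mul_one]
  exact hself ▸ hL.map_toLaurent_mul_laurentBarInv_pos hα hp0

end IsSzegoFunctional

/-- `⟨f,g⟩ = L(f(z)·ḡ(1/z))` is an inner product on the space of
Laurent polynomials: it is linear in the first argument, conjugate symmetric, and
for every nonzero `f` the value `⟨f,f⟩` is a positive real number. -/
theorem inner_product (α : ℕ → ℂ) (hα : ∀ k, ‖α k‖ < 1)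
    (L : LaurentPolynomial ℂ →ₗ[ℂ] ℂ) (hL1 : L 1 = 1)
    (hLphi : ∀ k : ℕ, 1 ≤ k → L (Polynomial.toLaurent (szego α k)) = 0)
    (hLbar : ∀ k : ℕ, 1 ≤ k → L (polyBarInv (szego α k)) = 0) :
    (∀ (a : ℂ) (f g h : LaurentPolynomial ℂ),
        L ((a • f + g) * laurentBarInv h) =
          a * L (f * laurentBarInv h) + L (g * laurentBarInv h)) ∧
    (∀ f g : LaurentPolynomial ℂ,
        L (f * laurentBarInv g) = (starRingEnd ℂ) (L (g * laurentBarInv f))) ∧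
    (∀ f : LaurentPolynomial ℂ, f ≠ 0 →
        ∃ c : ℝ, 0 < c ∧ L (f * laurentBarInv f) = (c : ℂ)) := by
  have hL : IsSzegoFunctional α L :=
    ⟨hL1, hLphi, fun k hk => laurentBarInv_toLaurent (szego α k) ▸ hLbar k hk⟩
  refine ⟨fun a f g h => ?_, fun f g => (hL.conj_map_mul_laurentBarInv g f).symm, fun f hf => ?_⟩
  · rw [add_mul, smul_mul_assoc, map_add, map_smul, smul_eq_mul]
  · obtain ⟨c, hc, hLc⟩ :=
      RCLike.pos_iff_exists_ofReal.mp (hL.map_mul_laurentBarInv_self_pos hα hf)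
    exact ⟨c, hc, hLc.symm⟩

end
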